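/- Let ρ(t,x) > 0 and u(t,x) be smooth functions satisfying the continuity equation ρ_t + (ρu)_x = 0, and let α > 0, θ > 0 with α ≠ 1. Define φ(ρ) = ρ^{α-1}/(α-1) + ε ρ^{θ-1}/(θ-1) for constants ε > 0, θ ≠ 1. Then ((ρ^{α-1} + ε ρ^{θ-1}) ρ u_x)_x = -ρ (φ(ρ))_{xt} - ρ u (φ(ρ))_{xx}. -/

import Mathlib

open Function


/-- Partial derivative in time of a function of `(t,x)`. -/
noncomputable def pderivT (f : ℝ → ℝ → ℝ) : ℝ → ℝ → ℝ := fun t x => deriv (fun τ => f τ x) t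

/-- Partial derivative in space of a function of `(t,x)`. -/
noncomputable def pderivX (f : ℝ → ℝ → ℝ) : ℝ → ℝ → ℝ := fun t x => deriv (fun y => f t y) x

section BDaux

lemma sliceX {f : ℝ → ℝ → ℝ} (hf : ContDiff ℝ (⊤ : ℕ∞) (uncurry f)) (t : ℝ) :
    ContDiff ℝ (⊤ : ℕ∞) (fun y => f t y) :=
  hf.comp (contDiff_const.prodMk contDiff_id)

lemma sliceT {f : ℝ → ℝ → ℝ} (hf : ContDiff ℝ (⊤ : ℕ∞) (uncurry f)) (x : ℝ) :
    ContDiff ℝ (⊤ : ℕ∞) (fun τ => f τ x) :=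
  hf.comp (contDiff_id.prodMk contDiff_const)

lemma contDiff_deriv {f : ℝ → ℝ} (hf : ContDiff ℝ (⊤ : ℕ∞) f) : ContDiff ℝ (⊤ : ℕ∞) (deriv f) := by
  have h := (hf.fderiv_right (m := ((⊤ : ℕ∞) : WithTop ℕ∞)) (by exact_mod_cast le_top)).clm_apply
    (contDiff_const (c := (1 : ℝ)))
  have e : (fun x => fderiv ℝ f x 1) = deriv f := funext fun x => fderiv_apply_one_eq_deriv
  rwa [e] at h

lemma pderivX_eq_fderiv {f : ℝ → ℝ → ℝ} {t x : ℝ}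
    (hf : DifferentiableAt ℝ (uncurry f) (t, x)) :
    pderivX f t x = fderiv ℝ (uncurry f) (t, x) (0, 1) := by
  have hι : HasDerivAt (fun y : ℝ => ((t : ℝ), y)) ((0 : ℝ), (1 : ℝ)) x :=
    (hasDerivAt_const x t).prodMk (hasDerivAt_id x)
  exact (hf.hasFDerivAt.comp_hasDerivAt_of_eq x hι rfl).deriv

lemma pderivT_eq_fderiv {f : ℝ → ℝ → ℝ} {t x : ℝ}
    (hf : DifferentiableAt ℝ (uncurry f) (t, x)) :
    pderivT f t x = fderiv ℝ (uncurry f) (t, x) (1, 0) := by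
  have hι : HasDerivAt (fun τ : ℝ => (τ, (x : ℝ))) ((1 : ℝ), (0 : ℝ)) t :=
    (hasDerivAt_id t).prodMk (hasDerivAt_const t x)
  exact (hf.hasFDerivAt.comp_hasDerivAt_of_eq t hι rfl).deriv

lemma clairaut {f : ℝ → ℝ → ℝ} (hf : ∀ p : ℝ × ℝ, ContDiffAt ℝ (⊤ : ℕ∞) (uncurry f) p) (t x : ℝ) :
    pderivT (pderivX f) t x = pderivX (pderivT f) t x := by
  have hdiff : ∀ p : ℝ × ℝ, DifferentiableAt ℝ (uncurry f) p :=
    fun p => (hf p).differentiableAt (by simp)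
  have hfd : ∀ p : ℝ × ℝ, DifferentiableAt ℝ (fderiv ℝ (uncurry f)) p :=
    fun p => ((hf p).fderiv_right (m := 1) (WithTop.coe_le_coe.mpr le_top)).differentiableAt one_ne_zero
  have hXfun : ∀ v : ℝ × ℝ, ∀ p : ℝ × ℝ,
      DifferentiableAt ℝ (fun q : ℝ × ℝ => fderiv ℝ (uncurry f) q v) p :=
    fun v p => (hfd p).clm_apply (differentiableAt_const v)
  have hfcl : ∀ v : ℝ × ℝ,
      fderiv ℝ (fun q : ℝ × ℝ => fderiv ℝ (uncurry f) q v) (t, x) =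
        (fderiv ℝ (fderiv ℝ (uncurry f)) (t, x)).flip v := by
    intro v
    rw [fderiv_clm_apply (hfd (t, x)) (differentiableAt_const v)]
    simp
  have e1 : pderivT (pderivX f) t x
      = fderiv ℝ (fderiv ℝ (uncurry f)) (t, x) (1, 0) (0, 1) := by
    have hXeq : (fun τ : ℝ => pderivX f τ x)
        = fun τ : ℝ => fderiv ℝ (uncurry f) (τ, x) ((0 : ℝ), (1 : ℝ)) :=
      funext fun τ => pderivX_eq_fderiv (hdiff (τ, x))
    have hι : HasDerivAt (fun τ : ℝ => (τ, (x : ℝ))) ((1 : ℝ), (0 : ℝ)) t :=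
      (hasDerivAt_id t).prodMk (hasDerivAt_const t x)
    have h2 : HasDerivAt (fun τ : ℝ => fderiv ℝ (uncurry f) (τ, x) ((0 : ℝ), (1 : ℝ)))
        (fderiv ℝ (fun q : ℝ × ℝ => fderiv ℝ (uncurry f) q ((0 : ℝ), (1 : ℝ))) (t, x) (1, 0)) t :=
      ((hXfun (0, 1) (t, x)).hasFDerivAt.comp_hasDerivAt_of_eq t hι rfl)
    have e : pderivT (pderivX f) t x = deriv (fun τ : ℝ => pderivX f τ x) t := rfl
    rw [e, hXeq, h2.deriv, hfcl]
    rfl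
  have e2 : pderivX (pderivT f) t x
      = fderiv ℝ (fderiv ℝ (uncurry f)) (t, x) (0, 1) (1, 0) := by
    have hTeq : (fun y : ℝ => pderivT f t y)
        = fun y : ℝ => fderiv ℝ (uncurry f) (t, y) ((1 : ℝ), (0 : ℝ)) :=
      funext fun y => pderivT_eq_fderiv (hdiff (t, y))
    have hι : HasDerivAt (fun y : ℝ => ((t : ℝ), y)) ((0 : ℝ), (1 : ℝ)) x :=
      (hasDerivAt_const x t).prodMk (hasDerivAt_id x)
    have h2 : HasDerivAt (fun y : ℝ => fderiv ℝ (uncurry f) (t, y) ((1 : ℝ), (0 : ℝ)))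
        (fderiv ℝ (fun q : ℝ × ℝ => fderiv ℝ (uncurry f) q ((1 : ℝ), (0 : ℝ))) (t, x) (0, 1)) x :=
      ((hXfun (1, 0) (t, x)).hasFDerivAt.comp_hasDerivAt_of_eq x hι rfl)
    have e : pderivX (pderivT f) t x = deriv (fun y : ℝ => pderivT f t y) x := rfl
    rw [e, hTeq, h2.deriv, hfcl]
    rfl
  rw [e1, e2]
  exact ((hf (t, x)).isSymmSndFDerivAt (by simp; exact WithTop.coe_le_coe.mpr le_top)) _ _

end BDaux

/-- Bresch–Desjardins-type identity (3.11): for smooth positive `ρ` and smooth `u` with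
`ρ_t + (ρu)_x = 0`, and `φ(ρ) = ρ^{α-1}/(α-1) + ε ρ^{θ-1}/(θ-1)` (`α,θ,ε > 0`, `α ≠ 1`,
`θ ≠ 1`), one has `((ρ^{α-1} + ε ρ^{θ-1}) ρ u_x)_x = -ρ (φ(ρ))_{xt} - ρ u (φ(ρ))_{xx}`. -/
theorem stmt_11 (α θ ε : ℝ) (hα : 0 < α) (hθ : 0 < θ) (hε : 0 < ε)
    (hα1 : α ≠ 1) (hθ1 : θ ≠ 1) (ρ u : ℝ → ℝ → ℝ)
    (hρ : ContDiff ℝ (⊤ : ℕ∞) (Function.uncurry ρ)) (hu : ContDiff ℝ (⊤ : ℕ∞) (Function.uncurry u))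
    (hρpos : ∀ t x, 0 < ρ t x)
    (hcont : ∀ t x, pderivT ρ t x + pderivX (fun t x => ρ t x * u t x) t x = 0) :
    ∀ t x,
      pderivX (fun t x =>
          ((ρ t x) ^ (α - 1) + ε * (ρ t x) ^ (θ - 1)) * ρ t x * pderivX u t x) t x =
        -ρ t x * pderivT (pderivX (fun t x =>
            (ρ t x) ^ (α - 1) / (α - 1) + ε * (ρ t x) ^ (θ - 1) / (θ - 1))) t x -
          ρ t x * u t x * pderivX (pderivX (fun t x =>
            (ρ t x) ^ (α - 1) / (α - 1) + ε * (ρ t x) ^ (θ - 1) / (θ - 1))) t x := by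
  intro t x
  have hα1' : α - 1 ≠ 0 := sub_ne_zero.mpr hα1
  have hθ1' : θ - 1 ≠ 0 := sub_ne_zero.mpr hθ1
  have hρs : ContDiff ℝ (⊤ : ℕ∞) (ρ t) := sliceX hρ t
  have hus : ContDiff ℝ (⊤ : ℕ∞) (u t) := sliceX hu t
  have hr : ∀ y, HasDerivAt (ρ t) (deriv (ρ t) y) y :=
    fun y => (hρs.differentiable (by simp) y).hasDerivAt
  have hv : ∀ y, HasDerivAt (u t) (deriv (u t) y) y :=
    fun y => (hus.differentiable (by simp) y).hasDerivAt
  have hr' : ∀ y, HasDerivAt (deriv (ρ t)) (deriv (deriv (ρ t)) y) y :=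
    fun y => ((contDiff_deriv hρs).differentiable (by simp) y).hasDerivAt
  have hv' : ∀ y, HasDerivAt (deriv (u t)) (deriv (deriv (u t)) y) y :=
    fun y => ((contDiff_deriv hus).differentiable (by simp) y).hasDerivAt
  have hFsmooth : ∀ p : ℝ × ℝ, ContDiffAt ℝ (⊤ : ℕ∞)
      (uncurry (fun t x => (ρ t x) ^ (α - 1) / (α - 1) + ε * (ρ t x) ^ (θ - 1) / (θ - 1))) p := by
    intro p
    have h1 : ContDiffAt ℝ (⊤ : ℕ∞)
        (fun y : ℝ => y ^ (α - 1) / (α - 1) + ε * y ^ (θ - 1) / (θ - 1)) (ρ p.1 p.2) :=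
      ((Real.contDiffAt_rpow_const_of_ne (hρpos p.1 p.2).ne').div_const _).add
        ((contDiffAt_const.mul (Real.contDiffAt_rpow_const_of_ne (hρpos p.1 p.2).ne')).div_const _)
    exact h1.comp p hρ.contDiffAt
  -- first spatial derivative of φ(ρ)
  have hW : ∀ y, pderivX (fun t x =>
      (ρ t x) ^ (α - 1) / (α - 1) + ε * (ρ t x) ^ (θ - 1) / (θ - 1)) t y
      = (ρ t y ^ (α - 2) + ε * ρ t y ^ (θ - 2)) * deriv (ρ t) y := by
    intro y
    have h1 := ((hr y).rpow_const (p := α - 1) (Or.inl (hρpos t y).ne')).div_const (α - 1)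
    have h2 := (((hr y).rpow_const (p := θ - 1) (Or.inl (hρpos t y).ne')).const_mul ε).div_const
      (θ - 1)
    have H : pderivX (fun t x =>
        (ρ t x) ^ (α - 1) / (α - 1) + ε * (ρ t x) ^ (θ - 1) / (θ - 1)) t y
        = deriv (ρ t) y * (α - 1) * ρ t y ^ (α - 1 - 1) / (α - 1)
          + ε * (deriv (ρ t) y * (θ - 1) * ρ t y ^ (θ - 1 - 1)) / (θ - 1) := (h1.add h2).deriv
    rw [H, show α - 1 - 1 = α - 2 from by ring, show θ - 1 - 1 = θ - 2 from by ring]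
    field_simp
  -- second spatial derivative of φ(ρ)
  have hS2 : pderivX (pderivX (fun t x =>
      (ρ t x) ^ (α - 1) / (α - 1) + ε * (ρ t x) ^ (θ - 1) / (θ - 1))) t x
      = ((α - 2) * ρ t x ^ (α - 3) + ε * ((θ - 2) * ρ t x ^ (θ - 3)))
          * deriv (ρ t) x * deriv (ρ t) x
        + (ρ t x ^ (α - 2) + ε * ρ t x ^ (θ - 2)) * deriv (deriv (ρ t)) x := by
    have hfun : (fun y => pderivX (fun t x =>
        (ρ t x) ^ (α - 1) / (α - 1) + ε * (ρ t x) ^ (θ - 1) / (θ - 1)) t y)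
        = fun y => (ρ t y ^ (α - 2) + ε * ρ t y ^ (θ - 2)) * deriv (ρ t) y := funext hW
    have h1 := ((hr x).rpow_const (p := α - 2) (Or.inl (hρpos t x).ne')).add
      (((hr x).rpow_const (p := θ - 2) (Or.inl (hρpos t x).ne')).const_mul ε)
    have H := (h1.mul (hr' x)).deriv
    have e : pderivX (pderivX (fun t x =>
        (ρ t x) ^ (α - 1) / (α - 1) + ε * (ρ t x) ^ (θ - 1) / (θ - 1))) t x
        = deriv (fun y => pderivX (fun t x =>
            (ρ t x) ^ (α - 1) / (α - 1) + ε * (ρ t x) ^ (θ - 1) / (θ - 1)) t y) x := rfl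
    rw [e, hfun]
    refine H.trans ?_
    rw [show α - 2 - 1 = α - 3 from by ring, show θ - 2 - 1 = θ - 3 from by ring]
    simp only [Pi.add_apply, Pi.mul_apply]
    ring
  -- time derivative of φ(ρ), rewritten via the continuity equation
  have hT : ∀ y, pderivT (fun t x =>
      (ρ t x) ^ (α - 1) / (α - 1) + ε * (ρ t x) ^ (θ - 1) / (θ - 1)) t y
      = -((ρ t y ^ (α - 2) + ε * ρ t y ^ (θ - 2))
          * (deriv (ρ t) y * u t y + ρ t y * deriv (u t) y)) := by
    intro y
    have hst : HasDerivAt (fun τ => ρ τ y) (pderivT ρ t y) t :=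
      ((sliceT hρ y).differentiable (by simp) t).hasDerivAt
    have h1 := ((hst.rpow_const (p := α - 1) (Or.inl (hρpos t y).ne')).div_const (α - 1))
    have h2 := (((hst.rpow_const (p := θ - 1) (Or.inl (hρpos t y).ne')).const_mul ε).div_const
      (θ - 1))
    have H : pderivT (fun t x =>
        (ρ t x) ^ (α - 1) / (α - 1) + ε * (ρ t x) ^ (θ - 1) / (θ - 1)) t y
        = pderivT ρ t y * (α - 1) * ρ t y ^ (α - 1 - 1) / (α - 1)
          + ε * (pderivT ρ t y * (θ - 1) * ρ t y ^ (θ - 1 - 1)) / (θ - 1) := (h1.add h2).deriv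
    have hcy : pderivT ρ t y = -(deriv (ρ t) y * u t y + ρ t y * deriv (u t) y) := by
      have h := hcont t y
      have hpx : pderivX (fun t x => ρ t x * u t x) t y
          = deriv (ρ t) y * u t y + ρ t y * deriv (u t) y := ((hr y).mul (hv y)).deriv
      rw [hpx] at h
      linarith
    rw [H, hcy, show α - 1 - 1 = α - 2 from by ring, show θ - 1 - 1 = θ - 2 from by ring]
    field_simp
    ring
  -- mixed derivative via Clairaut
  have hTX : pderivT (pderivX (fun t x =>
      (ρ t x) ^ (α - 1) / (α - 1) + ε * (ρ t x) ^ (θ - 1) / (θ - 1))) t x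
      = -((((α - 2) * ρ t x ^ (α - 3) + ε * ((θ - 2) * ρ t x ^ (θ - 3))) * deriv (ρ t) x)
            * (deriv (ρ t) x * u t x + ρ t x * deriv (u t) x)
          + (ρ t x ^ (α - 2) + ε * ρ t x ^ (θ - 2))
            * (deriv (deriv (ρ t)) x * u t x + deriv (ρ t) x * deriv (u t) x
              + (deriv (ρ t) x * deriv (u t) x + ρ t x * deriv (deriv (u t)) x))) := by
    rw [clairaut hFsmooth t x]
    have hfun : (fun y => pderivT (fun t x =>
        (ρ t x) ^ (α - 1) / (α - 1) + ε * (ρ t x) ^ (θ - 1) / (θ - 1)) t y)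
        = fun y => -((ρ t y ^ (α - 2) + ε * ρ t y ^ (θ - 2))
            * (deriv (ρ t) y * u t y + ρ t y * deriv (u t) y)) := funext hT
    have h1 := ((hr x).rpow_const (p := α - 2) (Or.inl (hρpos t x).ne')).add
      (((hr x).rpow_const (p := θ - 2) (Or.inl (hρpos t x).ne')).const_mul ε)
    have h2 := ((hr' x).mul (hv x)).add ((hr x).mul (hv' x))
    have H := ((h1.mul h2).neg).deriv
    have e : pderivX (pderivT (fun t x =>
        (ρ t x) ^ (α - 1) / (α - 1) + ε * (ρ t x) ^ (θ - 1) / (θ - 1))) t x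
        = deriv (fun y => pderivT (fun t x =>
            (ρ t x) ^ (α - 1) / (α - 1) + ε * (ρ t x) ^ (θ - 1) / (θ - 1)) t y) x := rfl
    rw [e, hfun]
    refine H.trans ?_
    rw [show α - 2 - 1 = α - 3 from by ring, show θ - 2 - 1 = θ - 3 from by ring]
    simp only [Pi.add_apply, Pi.mul_apply]
    ring
  -- the left-hand side
  have hL : pderivX (fun t x =>
      ((ρ t x) ^ (α - 1) + ε * (ρ t x) ^ (θ - 1)) * ρ t x * pderivX u t x) t x
      = ((deriv (ρ t) x * (α - 1) * ρ t x ^ (α - 2)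
            + ε * (deriv (ρ t) x * (θ - 1) * ρ t x ^ (θ - 2))) * ρ t x
          + (ρ t x ^ (α - 1) + ε * ρ t x ^ (θ - 1)) * deriv (ρ t) x) * deriv (u t) x
        + (ρ t x ^ (α - 1) + ε * ρ t x ^ (θ - 1)) * ρ t x * deriv (deriv (u t)) x := by
    have h1 := ((hr x).rpow_const (p := α - 1) (Or.inl (hρpos t x).ne')).add
      (((hr x).rpow_const (p := θ - 1) (Or.inl (hρpos t x).ne')).const_mul ε)
    have H := ((h1.mul (hr x)).mul (hv' x)).deriv
    have e : pderivX (fun t x =>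
        ((ρ t x) ^ (α - 1) + ε * (ρ t x) ^ (θ - 1)) * ρ t x * pderivX u t x) t x
        = deriv (fun y => ((ρ t y) ^ (α - 1) + ε * (ρ t y) ^ (θ - 1)) * ρ t y * deriv (u t) y)
            x := rfl
    rw [e]
    refine H.trans ?_
    rw [show α - 1 - 1 = α - 2 from by ring, show θ - 1 - 1 = θ - 2 from by ring]
    simp only [Pi.add_apply, Pi.mul_apply]
  rw [hL, hTX, hS2]
  have P1 : ρ t x ^ (α - 1) = ρ t x ^ (α - 3) * ρ t x * ρ t x := by
    rw [show α - 1 = α - 3 + 1 + 1 from by ring, Real.rpow_add_one (hρpos t x).ne',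
      Real.rpow_add_one (hρpos t x).ne']
  have P2 : ρ t x ^ (α - 2) = ρ t x ^ (α - 3) * ρ t x := by
    rw [show α - 2 = α - 3 + 1 from by ring, Real.rpow_add_one (hρpos t x).ne']
  have P3 : ρ t x ^ (θ - 1) = ρ t x ^ (θ - 3) * ρ t x * ρ t x := by
    rw [show θ - 1 = θ - 3 + 1 + 1 from by ring, Real.rpow_add_one (hρpos t x).ne',
      Real.rpow_add_one (hρpos t x).ne']
  have P4 : ρ t x ^ (θ - 2) = ρ t x ^ (θ - 3) * ρ t x := by
    rw [show θ - 2 = θ - 3 + 1 from by ring, Real.rpow_add_one (hρpos t x).ne']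
  rw [P1, P2, P3, P4]
  ring
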